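/- Let D₀ > 0 be a fixed design distance, θ ∈ (0, π) a fixed visual angle, and let H₁, H₂ ≥ 0 with H₁ ≠ H₂ be two heights. Suppose letters at height Hᵢ are engraved with size hᵢ = 2·√(Hᵢ² + D₀²)·tan(θ/2) for i = 1, 2. Then for any viewing distance D > 0, the subtended half-angles agree, i.e. arctan(h₁/(2·√(H₁² + D²))) = arctan(h₂/(2·√(H₂² + D²))), if and only if D = D₀. In other words, there is one and only one horizontal distance from which all height-scaled letters subtend the same visual angle. -/
import Mathlib


open Real

/-- Dürer's height-scaling prescription: letters at heights `H₁ ≠ H₂` engraved with sizes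
`hᵢ = 2·√(Hᵢ² + D₀²)·tan(θ/2)` subtend the same visual half-angle from distance `D > 0`
if and only if `D = D₀`: there is one and only one distance from which the scaling works. -/
theorem durer_unique_distance
    (D₀ θ H₁ H₂ h₁ h₂ : ℝ)
    (hD₀ : 0 < D₀) (hθ : θ ∈ Set.Ioo 0 π)
    (hH₁ : 0 ≤ H₁) (hH₂ : 0 ≤ H₂) (hne : H₁ ≠ H₂)
    (hh₁ : h₁ = 2 * Real.sqrt (H₁ ^ 2 + D₀ ^ 2) * Real.tan (θ / 2))
    (hh₂ : h₂ = 2 * Real.sqrt (H₂ ^ 2 + D₀ ^ 2) * Real.tan (θ / 2)) :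
    ∀ D : ℝ, 0 < D →
      (Real.arctan (h₁ / (2 * Real.sqrt (H₁ ^ 2 + D ^ 2)))
        = Real.arctan (h₂ / (2 * Real.sqrt (H₂ ^ 2 + D ^ 2)))
        ↔ D = D₀) := by
  intro D hD
  have ht : 0 < Real.tan (θ / 2) :=
    Real.tan_pos_of_pos_of_lt_pi_div_two (by linarith [hθ.1]) (by linarith [hθ.2])
  have ha₁ : (0:ℝ) < H₁ ^ 2 + D₀ ^ 2 := by positivity
  have ha₂ : (0:ℝ) < H₂ ^ 2 + D₀ ^ 2 := by positivity
  have hb₁ : (0:ℝ) < H₁ ^ 2 + D ^ 2 := by positivity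
  have hb₂ : (0:ℝ) < H₂ ^ 2 + D ^ 2 := by positivity
  have sa₁ : (0:ℝ) < Real.sqrt (H₁ ^ 2 + D₀ ^ 2) := Real.sqrt_pos.mpr ha₁
  have sa₂ : (0:ℝ) < Real.sqrt (H₂ ^ 2 + D₀ ^ 2) := Real.sqrt_pos.mpr ha₂
  have sb₁ : (0:ℝ) < Real.sqrt (H₁ ^ 2 + D ^ 2) := Real.sqrt_pos.mpr hb₁
  have sb₂ : (0:ℝ) < Real.sqrt (H₂ ^ 2 + D ^ 2) := Real.sqrt_pos.mpr hb₂
  constructor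
  · intro h
    have h' := Real.arctan_injective h
    rw [hh₁, hh₂] at h'
    have h2 : Real.sqrt (H₁ ^ 2 + D₀ ^ 2) * Real.sqrt (H₂ ^ 2 + D ^ 2)
        = Real.sqrt (H₂ ^ 2 + D₀ ^ 2) * Real.sqrt (H₁ ^ 2 + D ^ 2) := by
      field_simp at h'
      nlinarith [h', ht, sb₁, sb₂]
    rw [← Real.sqrt_mul ha₁.le, ← Real.sqrt_mul ha₂.le] at h2
    have h3 : (H₁ ^ 2 + D₀ ^ 2) * (H₂ ^ 2 + D ^ 2)
        = (H₂ ^ 2 + D₀ ^ 2) * (H₁ ^ 2 + D ^ 2) := by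
      exact (Real.sqrt_inj (by positivity) (by positivity)).mp h2
    have hsq : D ^ 2 = D₀ ^ 2 := by
      have hne2 : H₁ ^ 2 ≠ H₂ ^ 2 := fun hc => hne (by nlinarith)
      have : (H₂ ^ 2 - H₁ ^ 2) * (D₀ ^ 2 - D ^ 2) = 0 := by nlinarith
      rcases mul_eq_zero.mp this with h | h
      · exact absurd (by linarith : H₁ ^ 2 = H₂ ^ 2) hne2
      · linarith
    have h4 : (D - D₀) * (D + D₀) = 0 := by ring_nf; linarith
    rcases mul_eq_zero.mp h4 with h | h
    · linarith
    · linarith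
  · intro h
    subst h
    rw [hh₁, hh₂]
    have e1 : 2 * Real.sqrt (H₁ ^ 2 + D ^ 2) * Real.tan (θ / 2)
        / (2 * Real.sqrt (H₁ ^ 2 + D ^ 2)) = Real.tan (θ / 2) :=
      mul_div_cancel_left₀ _ (by positivity)
    have e2 : 2 * Real.sqrt (H₂ ^ 2 + D ^ 2) * Real.tan (θ / 2)
        / (2 * Real.sqrt (H₂ ^ 2 + D ^ 2)) = Real.tan (θ / 2) :=
      mul_div_cancel_left₀ _ (by positivity)
    rw [e1, e2]
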